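/- (Policy improvement, one step) Let π⁰ be the Gaussian policy N(K(x-ρ_t w), λBC^{T-t-1}) with value function J^{π⁰}(t,x) = A^{T-t}(x-ρ_t w)² + f(t), where A = r_f² + (a²+σ²)K² + 2r_f aK. Define the improved policy π¹_t(·;x) as the density minimizing ∫[A^{T-t-1}((a²+σ²)u² + 2a(r_f x - ρ_{t+1}w)u) + λ ln π(u)]π(u)du. Then π¹_t = N(-a r_f(x-ρ_t w)/(a²+σ²), λ/(2(a²+σ²)A^{T-t-1})), and the resulting value J^{π¹}(t,x) = A^{T-t-1}(σ²r_f²/(a²+σ²))(x-ρ_t w)² + (λ/2)ln((a²+σ²)/(πλ)) + (λ ln A/2)(T-t-1) + f(t+1) satisfies J^{π¹}(t,x) ≤ J^{π⁰}(t,x) for all x. -/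

import Mathlib

open MeasureTheory Real

/-- Gaussian density with mean `m` and variance `s2`. -/
noncomputable def gaussPdf (m s2 u : ℝ) : ℝ :=
  (Real.sqrt (2 * Real.pi * s2))⁻¹ * Real.exp (-(u - m) ^ 2 / (2 * s2))

/-- A probability density on ℝ with finite relevant integrals. -/
def IsAdmissibleDensity (p : ℝ → ℝ) : Prop :=
  (∀ u, 0 ≤ p u) ∧ (∫ u, p u) = 1 ∧
    Integrable (fun u => u ^ 2 * p u) ∧
    Integrable (fun u => p u * Real.log (p u))

/-- The function `f` of the paper's Theorem 2. -/
noncomputable def fPaper (lam B C A a σ w b : ℝ) (T s : ℕ) : ℝ :=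
  lam * B * (a ^ 2 + σ ^ 2) * (1 - (C * A) ^ (T - s)) / (1 - C * A) -
    lam / 2 * Real.log (2 * Real.pi * lam * B) * ((T : ℝ) - s) -
    lam / 2 * ((T : ℝ) - s) -
    lam / 2 * Real.log C * (∑ i ∈ Finset.range (T - s), (i : ℝ)) - (w - b) ^ 2

/-!
The one-step functional is `∫ (φ + λ log p) p` for a quadratic cost `φ`. Completing the square,
`φ + λ log p₁` is constant for the Gaussian `p₁ ∝ exp (-φ / λ)`, so the functional at `p` exceeds
its value at `p₁` by `λ` times the Kullback–Leibler divergence of `p` from `p₁`, which is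
nonnegative by Gibbs' inequality (`log z ≤ z - 1` pointwise). The improvement over `π⁰` then rests
on two estimates: `σ² r_f² / (a² + σ²)` is the minimum of `A` over `K`, and the entropy constants
compare through `log z ≤ z - 1` once more.
-/

open ProbabilityTheory

section Gaussian

variable {s2 : ℝ}

lemma gaussPdf_eq_gaussianPDFReal (m : ℝ) (hs2 : 0 ≤ s2) :
    gaussPdf m s2 = gaussianPDFReal m ⟨s2, hs2⟩ := by
  funext u
  simp only [gaussPdf, gaussianPDFReal, neg_div]
  rfl

lemma gaussPdf_pos (m : ℝ) (hs2 : 0 < s2) (u : ℝ) : 0 < gaussPdf m s2 u := by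
  have : 0 < √(2 * π * s2) := Real.sqrt_pos.2 (by positivity)
  unfold gaussPdf
  positivity

lemma integrable_gaussPdf (m : ℝ) (hs2 : 0 ≤ s2) : Integrable (gaussPdf m s2) := by
  rw [gaussPdf_eq_gaussianPDFReal m hs2]
  exact integrable_gaussianPDFReal m _

lemma integral_gaussPdf (m : ℝ) (hs2 : 0 < s2) : ∫ u, gaussPdf m s2 u = 1 := by
  rw [gaussPdf_eq_gaussianPDFReal m hs2.le]
  exact integral_gaussianPDFReal_eq_one m fun h => hs2.ne' (congrArg Subtype.val h)

lemma log_gaussPdf (m : ℝ) (hs2 : 0 < s2) (u : ℝ) :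
    log (gaussPdf m s2 u) = -(u - m) ^ 2 / (2 * s2) - log (2 * π * s2) / 2 := by
  have h : 0 < 2 * π * s2 := by positivity
  rw [gaussPdf, log_mul (by positivity) (exp_ne_zero _), log_inv, log_exp, log_sqrt h.le]
  ring

/-- Completing the square: this Gaussian is proportional to `exp (-(α u² + β u) / λ)`. -/
lemma add_mul_log_gaussPdf {α lam : ℝ} (β : ℝ) (hα : 0 < α) (hlam : 0 < lam) (u : ℝ) :
    α * u ^ 2 + β * u + lam * log (gaussPdf (-β / (2 * α)) (lam / (2 * α)) u) =
      -β ^ 2 / (4 * α) + lam / 2 * log (α / (π * lam)) := by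
  have hvar : 2 * π * (lam / (2 * α)) = (α / (π * lam))⁻¹ := by field_simp
  rw [log_gaussPdf _ (by positivity), hvar, log_inv]
  field_simp
  ring

end Gaussian

section Gibbs

variable {φ p q : ℝ → ℝ} {lam c : ℝ}

lemma sub_le_mul_log_sub_mul_log {x y : ℝ} (hx : 0 ≤ x) (hy : 0 < y) :
    x - y ≤ x * log x - x * log y := by
  rcases hx.eq_or_lt with rfl | hx
  · simpa using hy.le
  have h := mul_le_mul_of_nonneg_left (log_le_sub_one_of_pos (div_pos hy hx)) hx.le
  have hxy : x * (y / x - 1) = y - x := by field_simp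
  rw [log_div hy.ne' hx.ne', hxy] at h
  linarith

lemma integral_add_mul_log_mul_of_eq_const (hq : ∀ u, φ u + lam * log (q u) = c)
    (hq_one : ∫ u, q u = 1) : ∫ u, (φ u + lam * log (q u)) * q u = c := by
  simp_rw [hq]
  rw [integral_const_mul, hq_one, mul_one]

lemma le_integral_add_mul_log_mul_of_eq_const (hlam : 0 < lam)
    (hq_pos : ∀ u, 0 < q u) (hq_int : Integrable q) (hq_one : ∫ u, q u = 1)
    (hq : ∀ u, φ u + lam * log (q u) = c)
    (hp_nonneg : ∀ u, 0 ≤ p u) (hp_one : ∫ u, p u = 1)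
    (hφp : Integrable fun u => φ u * p u) (hplogp : Integrable fun u => p u * log (p u)) :
    c ≤ ∫ u, (φ u + lam * log (p u)) * p u := by
  have hp_int : Integrable p := .of_integral_ne_zero (by rw [hp_one]; exact one_ne_zero)
  have hplogq : Integrable fun u => p u * log (q u) := by
    refine (((hp_int.const_mul c).sub hφp).div_const lam).congr (ae_of_all _ fun u => ?_)
    simp only [Pi.sub_apply]
    rw [← hq u]
    field_simp
    ring
  have hkl_int : Integrable fun u => p u * log (p u) - p u * log (q u) := hplogp.sub hplogq
  have hkl_nonneg : 0 ≤ ∫ u, (p u * log (p u) - p u * log (q u)) :=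
    calc 0 = ∫ u, (p u - q u) := by rw [integral_sub hp_int hq_int, hp_one, hq_one, sub_self]
      _ ≤ _ := integral_mono (hp_int.sub hq_int) hkl_int fun u =>
        sub_le_mul_log_sub_mul_log (hp_nonneg u) (hq_pos u)
  have hsplit : ∀ u, (φ u + lam * log (p u)) * p u =
      c * p u + lam * (p u * log (p u) - p u * log (q u)) := by
    intro u
    rw [← hq u]
    ring
  calc c ≤ c + lam * ∫ u, (p u * log (p u) - p u * log (q u)) :=
        le_add_of_nonneg_right (mul_nonneg hlam.le hkl_nonneg)
    _ = ∫ u, (φ u + lam * log (p u)) * p u := by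
      simp_rw [hsplit]
      rw [integral_add (hp_int.const_mul c) (hkl_int.const_mul lam), integral_const_mul,
        integral_const_mul, hp_one, mul_one]

end Gibbs

section QuadraticCost

variable {α β lam : ℝ}

lemma IsAdmissibleDensity.integrable_quadratic_mul {p : ℝ → ℝ} (hp : IsAdmissibleDensity p)
    (α β : ℝ) : Integrable fun u => (α * u ^ 2 + β * u) * p u := by
  obtain ⟨hp_nonneg, hp_one, hp_sq, -⟩ := hp
  have hp_int : Integrable p := .of_integral_ne_zero (by rw [hp_one]; exact one_ne_zero)
  have hp_lin : Integrable fun u => u * p u := by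
    refine (hp_sq.add hp_int).mono' (aestronglyMeasurable_id.mul hp_int.1)
      (ae_of_all _ fun u => ?_)
    have hu : |u| ≤ u ^ 2 + 1 := by nlinarith [sq_abs u, abs_nonneg u, sq_nonneg (|u| - 1)]
    rw [norm_mul, Real.norm_of_nonneg (hp_nonneg u), Real.norm_eq_abs]
    simpa [add_mul] using mul_le_mul_of_nonneg_right hu (hp_nonneg u)
  exact ((hp_sq.const_mul α).add (hp_lin.const_mul β)).congr
    (ae_of_all _ fun u => by simp only [Pi.add_apply]; ring)

lemma integral_quadratic_add_mul_log_gaussPdf (hα : 0 < α) (hlam : 0 < lam) :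
    ∫ u, (α * u ^ 2 + β * u + lam * log (gaussPdf (-β / (2 * α)) (lam / (2 * α)) u)) *
        gaussPdf (-β / (2 * α)) (lam / (2 * α)) u =
      -β ^ 2 / (4 * α) + lam / 2 * log (α / (π * lam)) :=
  integral_add_mul_log_mul_of_eq_const (add_mul_log_gaussPdf β hα hlam)
    (integral_gaussPdf _ (by positivity))

lemma le_integral_quadratic_add_mul_log (hα : 0 < α) (hlam : 0 < lam) {p : ℝ → ℝ}
    (hp : IsAdmissibleDensity p) :
    -β ^ 2 / (4 * α) + lam / 2 * log (α / (π * lam)) ≤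
      ∫ u, (α * u ^ 2 + β * u + lam * log (p u)) * p u :=
  le_integral_add_mul_log_mul_of_eq_const (φ := fun u => α * u ^ 2 + β * u) hlam
    (gaussPdf_pos _ (by positivity)) (integrable_gaussPdf _ (by positivity))
    (integral_gaussPdf _ (by positivity)) (add_mul_log_gaussPdf β hα hlam)
    hp.1 hp.2.1 (hp.integrable_quadratic_mul α β) hp.2.2.2

end QuadraticCost

section ValueComparison

lemma mul_inv_pow_sub_succ {G₀ : Type*} [GroupWithZero G₀] {r : G₀} (hr : r ≠ 0) {T t : ℕ}
    (ht : t < T) : r * r⁻¹ ^ (T - t) = r⁻¹ ^ (T - (t + 1)) := by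
  rw [show T - t = T - (t + 1) + 1 by omega, pow_succ', ← mul_assoc, mul_inv_cancel₀ hr, one_mul]

lemma cast_sub_sub_one {R : Type*} [AddCommGroupWithOne R] {T t : ℕ} (ht : t < T) :
    ((T - t - 1 : ℕ) : R) = T - t - 1 := by
  rw [Nat.sub_sub, Nat.cast_sub (by omega), Nat.cast_add_one, sub_add_eq_sub_sub]

lemma mul_sq_div_le_quadratic {a σ : ℝ} (r K : ℝ) (h : 0 < a ^ 2 + σ ^ 2) :
    σ ^ 2 * r ^ 2 / (a ^ 2 + σ ^ 2) ≤ r ^ 2 + (a ^ 2 + σ ^ 2) * K ^ 2 + 2 * r * a * K := by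
  rw [div_le_iff₀ h]
  nlinarith [sq_nonneg ((a ^ 2 + σ ^ 2) * K + r * a)]

lemma fPaper_eq_fPaper_succ (a σ lam w b B C A : ℝ) {T t : ℕ} (ht : t < T)
    (hCA : C * A ≠ 1) :
    fPaper lam B C A a σ w b T t =
      fPaper lam B C A a σ w b T (t + 1) + lam * B * (a ^ 2 + σ ^ 2) * (C * A) ^ (T - t - 1) -
        lam / 2 * log (2 * π * lam * B) - lam / 2 - lam / 2 * log C * ((T - t - 1 : ℕ) : ℝ) := by
  have hD : 1 - C * A ≠ 0 := sub_ne_zero.2 hCA.symm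
  unfold fPaper
  rw [show T - t = T - t - 1 + 1 by omega, show T - (t + 1) = T - t - 1 by omega,
    Finset.sum_range_succ, pow_succ]
  push_cast
  field_simp
  ring

/-- This is `log z ≤ z - 1` for `z = 2 B s (C A)ⁿ`. -/
lemma half_log_div_add_le {lam B C A s : ℝ} (hlam : 0 < lam) (hB : 0 < B) (hC : 0 < C)
    (hA : 0 < A) (hs : 0 < s) (n : ℕ) :
    lam / 2 * log (s / (π * lam)) + lam * log A / 2 * n ≤
      lam * B * s * (C * A) ^ n - lam / 2 * log (2 * π * lam * B) - lam / 2 -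
        lam / 2 * log C * n := by
  have hz : 2 * B * s * (C * A) ^ n = s / (π * lam) * (2 * π * lam * B) * (C ^ n * A ^ n) := by
    rw [mul_pow]
    field_simp
  have hlog := log_le_sub_one_of_pos (show 0 < 2 * B * s * (C * A) ^ n by positivity)
  rw [hz, log_mul (by positivity : s / (π * lam) * (2 * π * lam * B) ≠ 0)
      (by positivity : C ^ n * A ^ n ≠ 0),
    log_mul (by positivity : s / (π * lam) ≠ 0) (by positivity : 2 * π * lam * B ≠ 0),
    log_mul (by positivity : C ^ n ≠ 0) (by positivity : A ^ n ≠ 0), log_pow, log_pow,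
    ← hz] at hlog
  nlinarith [mul_le_mul_of_nonneg_left hlog (by positivity : 0 ≤ lam / 2)]

lemma improved_value_le {a σ rf lam w b K B C A : ℝ} (hs : 0 < a ^ 2 + σ ^ 2) (hlam : 0 < lam)
    (hB : 0 < B) (hC : 0 < C) {T t : ℕ} (ht : t < T)
    (hA : A = rf ^ 2 + (a ^ 2 + σ ^ 2) * K ^ 2 + 2 * rf * a * K) (hApos : 0 < A)
    (hCA : C * A ≠ 1) (y : ℝ) :
    A ^ (T - t - 1) * (σ ^ 2 * rf ^ 2 / (a ^ 2 + σ ^ 2)) * y ^ 2 +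
        lam / 2 * log ((a ^ 2 + σ ^ 2) / (π * lam)) +
        lam * log A / 2 * ((T : ℝ) - t - 1) + fPaper lam B C A a σ w b T (t + 1) ≤
      A ^ (T - t) * y ^ 2 + fPaper lam B C A a σ w b T t := by
  have hquad : A ^ (T - t - 1) * (σ ^ 2 * rf ^ 2 / (a ^ 2 + σ ^ 2)) * y ^ 2 ≤
      A ^ (T - t) * y ^ 2 := by
    have hcoef : σ ^ 2 * rf ^ 2 / (a ^ 2 + σ ^ 2) ≤ A := hA ▸ mul_sq_div_le_quadratic rf K hs
    rw [show A ^ (T - t) = A ^ (T - t - 1) * A by rw [← pow_succ]; congr 1; omega]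
    gcongr
  rw [fPaper_eq_fPaper_succ a σ lam w b B C A ht hCA, ← cast_sub_sub_one ht]
  linarith [half_log_div_add_le hlam hB hC hApos hs (T - t - 1)]

end ValueComparison

/-- Policy improvement, one step. -/
theorem stmt10 (a σ rf lam w b K B C x : ℝ)
    (hσ : 0 < σ) (hrf : 0 < rf) (hlam : 0 < lam) (hB : 0 < B) (hC : 0 < C)
    (T t : ℕ) (ht : t < T)
    (A : ℝ) (hA : A = rf ^ 2 + (a ^ 2 + σ ^ 2) * K ^ 2 + 2 * rf * a * K)
    (hApos : 0 < A) (hCA : C * A ≠ 1) :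
    let ρt : ℝ := (rf⁻¹) ^ (T - t)
    let ρt1 : ℝ := (rf⁻¹) ^ (T - (t + 1))
    -- value of a density p in the one-step improvement functional
    let G : (ℝ → ℝ) → ℝ := fun p =>
      (∫ u, (A ^ (T - t - 1) * ((a ^ 2 + σ ^ 2) * u ^ 2 +
          2 * a * (rf * x - ρt1 * w) * u) + lam * Real.log (p u)) * p u) +
        A ^ (T - t - 1) * (rf * x - ρt1 * w) ^ 2 + fPaper lam B C A a σ w b T (t + 1)
    -- the improved policy
    let p1 : ℝ → ℝ := gaussPdf (-(a * rf * (x - ρt * w)) / (a ^ 2 + σ ^ 2))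
      (lam / (2 * (a ^ 2 + σ ^ 2) * A ^ (T - t - 1)))
    -- p1 minimizes G among admissible densities
    (∀ p : ℝ → ℝ, IsAdmissibleDensity p → G p1 ≤ G p) ∧
    -- the improved value
    G p1 = A ^ (T - t - 1) * (σ ^ 2 * rf ^ 2 / (a ^ 2 + σ ^ 2)) * (x - ρt * w) ^ 2 +
      lam / 2 * Real.log ((a ^ 2 + σ ^ 2) / (Real.pi * lam)) +
      lam * Real.log A / 2 * ((T : ℝ) - t - 1) + fPaper lam B C A a σ w b T (t + 1) ∧
    -- and it improves upon the value of the initial policy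
    G p1 ≤ A ^ (T - t) * (x - ρt * w) ^ 2 + fPaper lam B C A a σ w b T t := by
  intro ρt ρt1 G p1
  have hρ : rf * x - ρt1 * w = rf * (x - ρt * w) := by
    simp only [ρt, ρt1, ← mul_inv_pow_sub_succ hrf.ne' ht]
    ring
  -- `G` is the free energy of the cost `α u² + β u`, up to an additive constant
  set α := A ^ (T - t - 1) * (a ^ 2 + σ ^ 2)
  set β := A ^ (T - t - 1) * (2 * a * rf * (x - ρt * w))
  have hα : 0 < α := by positivity
  have hG : ∀ p, G p = (∫ u, (α * u ^ 2 + β * u + lam * log (p u)) * p u) +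
      A ^ (T - t - 1) * (rf * (x - ρt * w)) ^ 2 + fPaper lam B C A a σ w b T (t + 1) := by
    intro p
    simp only [G, hρ]
    congr 3
    funext u
    ring
  have hp1 : p1 = gaussPdf (-β / (2 * α)) (lam / (2 * α)) := by
    simp only [p1, α, β]
    congr 1 <;> field_simp
  have hvalue : G p1 = A ^ (T - t - 1) * (σ ^ 2 * rf ^ 2 / (a ^ 2 + σ ^ 2)) * (x - ρt * w) ^ 2 +
      lam / 2 * log ((a ^ 2 + σ ^ 2) / (π * lam)) +
      lam * log A / 2 * ((T : ℝ) - t - 1) + fPaper lam B C A a σ w b T (t + 1) := by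
    rw [hG, hp1, integral_quadratic_add_mul_log_gaussPdf hα hlam,
      show α / (π * lam) = A ^ (T - t - 1) * ((a ^ 2 + σ ^ 2) / (π * lam)) by ring,
      log_mul (by positivity) (by positivity), log_pow, cast_sub_sub_one ht]
    field_simp
    ring
  refine ⟨fun p hp => ?_, hvalue,
    hvalue ▸ improved_value_le (by positivity) hlam hB hC ht hA hApos hCA _⟩
  rw [hG p, hG p1, hp1, integral_quadratic_add_mul_log_gaussPdf hα hlam]
  gcongr
  exact le_integral_quadratic_add_mul_log hα hlam hp
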